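/- If P is an odd composite natural number, then there exists a natural number b with P ≤ b² and b < (P + 1)/2 such that b² − P is a perfect square; that is, the search over b starting from ⌈√P⌉ in Fermat's method terminates at some b strictly below (P + 1)/2 with b² − P a perfect square. -/
import Mathlib

lemma stmt_10_aux (u v : ℕ) (hu : Odd u) (hv : Odd v) (h3 : 3 ≤ u) (huv : u ≤ v) :
    ∃ b : ℕ, u * v ≤ b ^ 2 ∧ b < (u * v + 1) / 2 ∧ ∃ c : ℕ, b ^ 2 - u * v = c ^ 2 := by
  obtain ⟨b, hb⟩ := (hu.add_odd hv)
  obtain ⟨c, hc⟩ := (Nat.Odd.sub_odd hv hu)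
  have hb2 : u + v = 2 * b := by omega
  have hc2 : v - u = 2 * c := by omega
  have hvc : v = u + 2 * c := by omega
  have key : b ^ 2 = c ^ 2 + u * v := by nlinarith [hb2, hvc]
  have h3v : 3 ≤ v := le_trans h3 huv
  have hbig : u + v + 3 ≤ u * v := by nlinarith
  exact ⟨b, by omega, by omega, c, by omega⟩

/-- If P is an odd composite natural number, then there is a
natural b with P ≤ b² and b < (P + 1)/2 such that b² − P is a perfect square:
Fermat's search terminates strictly below (P + 1)/2. -/
theorem stmt_10 (P : ℕ) (hodd : Odd P) (hP : 1 < P) (hnp : ¬ P.Prime) :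
    ∃ b : ℕ, P ≤ b ^ 2 ∧ b < (P + 1) / 2 ∧ ∃ c : ℕ, b ^ 2 - P = c ^ 2 := by
  obtain ⟨u, hdvd, h2u, huP⟩ := Nat.exists_dvd_of_not_prime2 hP hnp
  set v := P / u with hv
  have hPuv : P = u * v := (Nat.mul_div_cancel' hdvd).symm
  have hou : Odd u := by
    rw [hPuv] at hodd; exact (Nat.odd_mul.mp hodd).1
  have hov : Odd v := by
    rw [hPuv] at hodd; exact (Nat.odd_mul.mp hodd).2
  have h3u : 3 ≤ u := by obtain ⟨k, hk⟩ := hou; omega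
  have h1v : 1 < v := by
    by_contra h
    push_neg at h
    interval_cases v <;> omega
  have h3v : 3 ≤ v := by obtain ⟨k, hk⟩ := hov; omega
  rcases le_total u v with h | h
  · rw [hPuv]; exact stmt_10_aux u v hou hov h3u h
  · rw [hPuv, mul_comm]; exact stmt_10_aux v u hov hou h3v h
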